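/- There is an assignment of p items of sizes s₁, ..., s_p into k bins such that the total size in each bin is exactly m, if and only if in the instance of Unsplittable Flow on K_{2,k} — where each edge (from s or t to a middle vertex) has capacity m, and for each item i there is a task from s to t with demand sᵢ and profit 1 — all p tasks can be simultaneously routed along s–t paths respecting all edge capacities, i.e., a profit of p is achievable. -/

import Mathlib

/-!
Every `s`–`t` path in `K_{2,k}` is `s, mⱼ, t` for a single middle vertex `mⱼ`, so a routing is
the same as an assignment of tasks to bins, and the load on both edges at `mⱼ` is the load of
bin `j`. A routing thus gives bins filled to at most `m`; as the sizes add up to `k·m`, every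
bin is filled to exactly `m`.
-/

open SimpleGraph Finset

theorem Finset.sum_fiberwise_eq_of_le {ι κ M : Type*} [Fintype ι] [Fintype κ] [DecidableEq κ]
    [AddCommMonoid M] [PartialOrder M] [IsOrderedCancelAddMonoid M]
    {f : ι → κ} {g : ι → M} {m : M}
    (hle : ∀ j, ∑ i ∈ univ.filter (fun i => f i = j), g i ≤ m)
    (hsum : ∑ i, g i = Fintype.card κ • m) (j : κ) :
    ∑ i ∈ univ.filter (fun i => f i = j), g i = m := by
  have htot : ∑ j, ∑ i ∈ univ.filter (fun i => f i = j), g i = ∑ _j : κ, m := by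
    rw [sum_fiberwise, hsum, sum_const, card_univ]
  exact (sum_eq_sum_iff_of_le fun j _ => hle j).mp htot j (mem_univ j)

theorem SimpleGraph.Walk.IsPath.mk_start_mem_edges_iff {V : Type*} {G : SimpleGraph V}
    {u v w : V} {p : G.Walk u v} (hp : p.IsPath) (huv : u ≠ v) :
    s(u, w) ∈ p.edges ↔ w = p.snd :=
  ⟨hp.eq_snd_of_mem_edges, fun h => h ▸ p.mk_start_snd_mem_edges (Walk.not_nil_of_ne huv)⟩

namespace completeBipartiteGraph

variable {α β : Type*}

theorem exists_inr_mem_of_mem_edgeSet {e : Sym2 (α ⊕ β)}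
    (he : e ∈ (completeBipartiteGraph α β).edgeSet) : ∃ j, Sum.inr j ∈ e := by
  induction e using Sym2.ind with
  | _ u v =>
    rw [mem_edgeSet, completeBipartiteGraph_adj, Sum.isRight_iff, Sum.isRight_iff] at he
    rcases he with ⟨-, j, rfl⟩ | ⟨⟨j, rfl⟩, -⟩
    · exact ⟨j, Sym2.mem_mk_right _ _⟩
    · exact ⟨j, Sym2.mem_mk_left _ _⟩

theorem exists_snd_eq_inr {a : α} {v : α ⊕ β} {p : (completeBipartiteGraph α β).Walk (.inl a) v}
    (hp : ¬p.Nil) : ∃ j, p.snd = .inr j := by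
  have hadj := p.adj_snd hp
  rw [completeBipartiteGraph_adj] at hadj
  rcases hadj with ⟨-, hr⟩ | ⟨hl, -⟩
  · exact Sum.isRight_iff.mp hr
  · simp at hl

def pathVia (a b : α) (j : β) : (completeBipartiteGraph α β).Walk (.inl a) (.inl b) :=
  .cons (v := .inr j) (by simp) (.cons (by simp) .nil)

theorem isPath_pathVia {a b : α} (hab : a ≠ b) (j : β) : (pathVia a b j).IsPath := by
  simp [pathVia, Walk.isPath_def, hab]

theorem eq_of_inr_mem_of_mem_edges_pathVia {a b : α} {j j' : β} {e : Sym2 (α ⊕ β)}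
    (he : e ∈ (pathVia a b j).edges) (hj' : Sum.inr j' ∈ e) : j' = j := by
  simpa [pathVia] using Walk.mem_support_of_mem_edges he hj'

end completeBipartiteGraph

open completeBipartiteGraph in
theorem stmt_12_general (k p m : ℕ) (sz : Fin p → ℕ)
    (hsum : ∑ i, sz i = k * m) :
    (∃ f : Fin p → Fin k,
        ∀ j : Fin k, ∑ i ∈ Finset.univ.filter (fun i => f i = j), sz i = m) ↔
      (∃ route : Fin p →
          (completeBipartiteGraph (Fin 2) (Fin k)).Walk (Sum.inl 0) (Sum.inl 1),
        (∀ i, (route i).IsPath) ∧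
          ∀ e ∈ (completeBipartiteGraph (Fin 2) (Fin k)).edgeSet,
            ∑ i ∈ Finset.univ.filter (fun i => e ∈ (route i).edges), sz i ≤ m) := by
  constructor
  · rintro ⟨f, hf⟩
    refine ⟨fun i => pathVia 0 1 (f i), fun i => isPath_pathVia (by decide) _, fun e he => ?_⟩
    obtain ⟨j, hj⟩ := exists_inr_mem_of_mem_edgeSet he
    calc ∑ i ∈ univ.filter (fun i => e ∈ (pathVia 0 1 (f i)).edges), sz i
        ≤ ∑ i ∈ univ.filter (fun i => f i = j), sz i := by
          refine sum_le_sum_of_subset fun i hi => ?_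
          rw [mem_filter] at hi ⊢
          exact ⟨hi.1, (eq_of_inr_mem_of_mem_edges_pathVia hi.2 hj).symm⟩
      _ = m := hf j
  · rintro ⟨route, hpath, hcap⟩
    choose f hf using fun i => exists_snd_eq_inr (Walk.not_nil_of_ne (p := route i) (by simp))
    refine ⟨f, sum_fiberwise_eq_of_le (fun j => ?_) (by rw [hsum, Fintype.card_fin, smul_eq_mul])⟩
    have hbin : univ.filter (fun i => f i = j) =
        univ.filter (fun i => s(.inl 0, .inr j) ∈ (route i).edges) := by
      ext i
      simp [(hpath i).mk_start_mem_edges_iff (by simp), hf, eq_comm]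
    rw [hbin]
    exact hcap _ (by simp)

/-- Correctness of the reduction from exact-fill Unary Bin Packing to Unsplittable Flow on
`K_{2,k}`: with `∑ᵢ sᵢ = k·m`, the `p` items of sizes `sᵢ` can be assigned to `k` bins each
filled to exactly `m` iff all `p` tasks (each from `s` to `t` with demand `sᵢ`) can be
simultaneously routed along `s`–`t` paths in `K_{2,k}` where every edge has capacity `m`. -/
theorem stmt_12 (k p m : ℕ) (hk : 1 ≤ k) (sz : Fin p → ℕ)
    (hsum : ∑ i, sz i = k * m) :
    (∃ f : Fin p → Fin k,
        ∀ j : Fin k, ∑ i ∈ Finset.univ.filter (fun i => f i = j), sz i = m) ↔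
      (∃ route : Fin p →
          (completeBipartiteGraph (Fin 2) (Fin k)).Walk (Sum.inl 0) (Sum.inl 1),
        (∀ i, (route i).IsPath) ∧
          ∀ e ∈ (completeBipartiteGraph (Fin 2) (Fin k)).edgeSet,
            ∑ i ∈ Finset.univ.filter (fun i => e ∈ (route i).edges), sz i ≤ m) :=
  stmt_12_general k p m sz hsum
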